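/- arXiv:1709.05212 — 2 statements merged into one kernel-verified Lean document; each statement's English description precedes it below -/
import Mathlib

section
/- Let Y be a free abelian group containing the coroot lattice, with Q^∨_+ the submonoid generated by the finitely many simple coroots α_i^∨ (which are ℤ-linearly independent in Y). For any subset A ⊆ Y and any y ∈ Y, the intersection A ∩ (y − Q^∨_+) is contained in a finite union ∪_{i=1}^m (a_i − Q^∨_+) with a_i ∈ A. -/
/-!
Write points of `y - Q^∨_+` as `y - ∑ i, c i • α_i^∨` with `c : I → ℕ`. The coefficient
vectors `c` for which this point lies in `A` form a subset of `I → ℕ`, which is well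
quasi-ordered by Dickson's lemma, so its minimal elements form a finite antichain and every
element lies above one of them. If `m ≤ c`, then
`y - ∑ c • α^∨ = (y - ∑ m • α^∨) - ∑ (c - m) • α^∨`, so the points attached to the minimal
vectors are the required `a_i`.
-/

theorem Set.IsPWO.exists_finset_subset_forall_exists_le {α : Type*} [PartialOrder α]
    {s : Set α} (hs : s.IsPWO) : ∃ F : Finset α, ↑F ⊆ s ∧ ∀ a ∈ s, ∃ b ∈ F, b ≤ a := by
  have hfin : {x | Minimal (· ∈ s) x}.Finite :=
    (setOfPred_minimal_antichain _).finite_of_partiallyWellOrderedOn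
      (hs.mono fun _ hx ↦ hx.prop)
  refine ⟨hfin.toFinset, fun x hx ↦ (hfin.mem_toFinset.mp hx).prop, fun a ha ↦ ?_⟩
  obtain ⟨b, hba, hb⟩ := hs.exists_le_minimal ha
  exact ⟨b, hfin.mem_toFinset.mpr hb, hba⟩

theorem inter_sub_corootCone_subset_finite_union_general
    {Y : Type} [AddCommGroup Y]
    {I : Type} [Fintype I] (coroot : I → Y)
    (A : Set Y) (y : Y) :
    ∃ F : Finset Y, ↑F ⊆ A ∧
      A ∩ {x : Y | ∃ c : I → ℕ, x = y - ∑ i, c i • coroot i}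
        ⊆ ⋃ a ∈ F, {x : Y | ∃ c : I → ℕ, x = a - ∑ i, c i • coroot i} := by
  classical
  set L := Fintype.linearCombination ℕ coroot
  simp only [← Fintype.linearCombination_apply ℕ coroot]
  obtain ⟨F, hFS, hF⟩ := (Set.isPWO_of_wellQuasiOrderedLE
    {c : I → ℕ | y - L c ∈ A}).exists_finset_subset_forall_exists_le
  refine ⟨F.image (y - L ·), by rw [Finset.coe_image, Set.image_subset_iff]; exact hFS, ?_⟩
  rintro _ ⟨hxA, c, rfl⟩
  obtain ⟨m, hmF, hmc⟩ := hF c hxA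
  refine Set.mem_iUnion₂.mpr ⟨y - L m, Finset.mem_image_of_mem _ hmF, c - m, ?_⟩
  rw [← sub_add_eq_sub_sub, ← map_add, add_tsub_cancel_of_le hmc]

/-- Hébert's lemma. Let `Y` be a finitely generated free abelian group and
`Q^∨_+` the submonoid of non-negative integral combinations of a finite `ℤ`-linearly
independent family `coroot`.  For any subset `A ⊆ Y` and any `y ∈ Y`, the intersection
`A ∩ (y − Q^∨_+)` is contained in a finite union of sets `a − Q^∨_+` with `a ∈ A`. -/
theorem inter_sub_corootCone_subset_finite_union
    {Y : Type} [AddCommGroup Y] [Module.Free ℤ Y] [Module.Finite ℤ Y]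
    {I : Type} [Fintype I] (coroot : I → Y)
    (hli : LinearIndependent ℤ coroot)
    (A : Set Y) (y : Y) :
    ∃ F : Finset Y, ↑F ⊆ A ∧
      A ∩ {x : Y | ∃ c : I → ℕ, x = y - ∑ i, c i • coroot i}
        ⊆ ⋃ a ∈ F, {x : Y | ∃ c : I → ℕ, x = a - ∑ i, c i • coroot i} :=
  inter_sub_corootCone_subset_finite_union_general coroot A y
end

section
/- Let K be the field of rational functions over ℚ in variables σ, σ' and the group algebra variables, and fix the involution s of K(x) (x an invertible variable) given by s(x) = x^{-1}, fixing σ, σ'. Define the Demazure–Lusztig operator H on K(x) by H(f) = b·f + c·s(f), where b = b(σ,σ';x) = ((σ−σ^{-1}) + (σ'−σ'^{-1})x)/(1−x²) and c = σ − b. Then H∘H = (σ − σ^{-1})·H + id as K-linear operators on K(x). -/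
/-- The coefficient field `K = ℚ(σ,σ')`. -/
noncomputable abbrev DLField : Type := FractionRing (MvPolynomial (Fin 2) ℚ)

/-- The field `K(x)` of rational functions in one more variable `x`. -/
noncomputable abbrev DLRatFunc : Type := RatFunc DLField

noncomputable def DL.σ : DLRatFunc :=
  RatFunc.C (algebraMap (MvPolynomial (Fin 2) ℚ) DLField (MvPolynomial.X 0))
noncomputable def DL.σ' : DLRatFunc :=
  RatFunc.C (algebraMap (MvPolynomial (Fin 2) ℚ) DLField (MvPolynomial.X 1))
noncomputable def DL.x : DLRatFunc := RatFunc.X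

/-- `b = b(σ,σ';x) = ((σ−σ⁻¹) + (σ'−σ'⁻¹)x)/(1−x²)`. -/
noncomputable def DL.b : DLRatFunc :=
  ((DL.σ - DL.σ⁻¹) + (DL.σ' - DL.σ'⁻¹) * DL.x) / (1 - DL.x ^ 2)

/-- `c = σ − b`. -/
noncomputable def DL.c : DLRatFunc := DL.σ - DL.b

/-- The Demazure–Lusztig operator `H(f) = b·f + c·s(f)`. -/
noncomputable def DL.H (s : DLRatFunc ≃ₐ[DLField] DLRatFunc) (f : DLRatFunc) : DLRatFunc :=
  DL.b * f + DL.c * s f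

set_option maxHeartbeats 1600000 in
set_option synthInstance.maxHeartbeats 200000 in
set_option maxRecDepth 8000 in
/-- Let `s` be the involution of `K(x)` over `K = ℚ(σ,σ')` with
`s(x) = x⁻¹`.  Then the Demazure–Lusztig operator `H(f) = b·f + c·s(f)` satisfies the
quadratic Hecke relation `H ∘ H = (σ − σ⁻¹)·H + id`. -/
theorem demazure_lusztig_quadratic
    (s : DLRatFunc ≃ₐ[DLField] DLRatFunc)
    (hsx : s DL.x = DL.x⁻¹)
    (hinvol : ∀ f, s (s f) = f) :
    ∀ f : DLRatFunc, DL.H s (DL.H s f) = (DL.σ - DL.σ⁻¹) * DL.H s f + f := by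
  -- basic nonvanishing facts
  have hx0 : DL.x ≠ 0 := RatFunc.X_ne_zero
  have hσ : DL.σ ≠ 0 := by
    rw [DL.σ, ← RatFunc.algebraMap_eq_C]
    intro h
    have h2 := (algebraMap DLField DLRatFunc).injective (h.trans (map_zero _).symm)
    have h3 := IsFractionRing.injective (MvPolynomial (Fin 2) ℚ) DLField
      (h2.trans (map_zero _).symm)
    exact MvPolynomial.X_ne_zero 0 h3
  have hσ' : DL.σ' ≠ 0 := by
    rw [DL.σ', ← RatFunc.algebraMap_eq_C]
    intro h
    have h2 := (algebraMap DLField DLRatFunc).injective (h.trans (map_zero _).symm)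
    have h3 := IsFractionRing.injective (MvPolynomial (Fin 2) ℚ) DLField
      (h2.trans (map_zero _).symm)
    exact MvPolynomial.X_ne_zero 1 h3
  have hx2 : (1 : DLRatFunc) - DL.x ^ 2 ≠ 0 := by
    have hmap : (1 : DLRatFunc) - DL.x ^ 2
        = algebraMap (Polynomial DLField) DLRatFunc (1 - Polynomial.X ^ 2) := by
      rw [map_sub, map_pow, map_one, DL.x, RatFunc.algebraMap_X]
    rw [hmap]
    intro h
    have h2 := IsFractionRing.injective (Polynomial DLField) DLRatFunc
      (h.trans (map_zero _).symm)
    have h3 := congrArg (fun p => Polynomial.coeff p 0) h2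
    simp [Polynomial.coeff_X_pow] at h3
  have hsσ : s DL.σ = DL.σ := by
    rw [DL.σ, ← RatFunc.algebraMap_eq_C]; exact s.commutes _
  have hsσ' : s DL.σ' = DL.σ' := by
    rw [DL.σ', ← RatFunc.algebraMap_eq_C]; exact s.commutes _
  -- key identity : b + s b = σ - σ⁻¹
  have key : s DL.b + DL.b = DL.σ - DL.σ⁻¹ := by
    have hsb : s DL.b = ((DL.σ - DL.σ⁻¹) + (DL.σ' - DL.σ'⁻¹) * DL.x⁻¹)
        / (1 - (DL.x⁻¹) ^ 2) := by
      rw [DL.b]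
      simp only [map_div₀, map_add, map_sub, map_mul, map_one, map_pow, map_inv₀,
        hsσ, hsσ', hsx]
    have hx2' : (1 : DLRatFunc) - (DL.x⁻¹) ^ 2 ≠ 0 := by
      have h : (1 : DLRatFunc) - (DL.x⁻¹) ^ 2 = (DL.x ^ 2 - 1) / DL.x ^ 2 := by
        field_simp
      rw [h]
      exact div_ne_zero (fun h' => hx2 (by linear_combination -h')) (pow_ne_zero 2 hx0)
    rw [hsb, DL.b, div_add_div _ _ hx2' hx2, div_eq_iff (mul_ne_zero hx2' hx2)]
    have hxx : DL.x * DL.x⁻¹ = 1 := mul_inv_cancel₀ hx0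
    ring_nf
    linear_combination (-(DL.σ - DL.σ⁻¹) * (DL.x * DL.x⁻¹ + 1)
      + (DL.σ'⁻¹ - DL.σ') * (DL.x + DL.x⁻¹)) * hxx
  intro f
  simp only [DL.H, DL.c, map_add, map_mul, map_sub, hsσ, hinvol]
  have hσinv : DL.σ * DL.σ⁻¹ = 1 := mul_inv_cancel₀ hσ
  have hb : s DL.b = (DL.σ - DL.σ⁻¹) - DL.b := by linear_combination key
  rw [hb]
  linear_combination f * hσinv
end
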